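/- arXiv:2106.01136 — 5 statements merged into one kernel-verified Lean document; each statement's English description precedes it below -/
import Mathlib

section
/- Let G be a finite simple graph, x ∈ V(G), and p = χ(G[N(x)]) ≥ 2. Let V_1, …, V_p be the color classes of a proper p-coloring of G[N(x)] with |V_1| ≥ ⋯ ≥ |V_p| ≥ 1. If for some r with 2 ≤ r ≤ p we have |V_r ∪ ⋯ ∪ V_p| ≤ χ(G) − r − 1, then p ≤ χ(G) − 2 and V(G) can be partitioned into two sets S and T with χ(G[S]) ≥ r and χ(G[T]) ≥ χ(G) + 1 − r. -/
open SimpleGraph Set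

attribute [local instance] Classical.propDecidable

/-- The chromatic number of a graph as a natural number. -/
noncomputable def chromNum {V : Type*} (G : SimpleGraph V) : ℕ := sInf {n | G.Colorable n}

/-- A set of vertices is independent if its elements are pairwise non-adjacent. -/
def IsIndepSet {V : Type*} (G : SimpleGraph V) (A : Set V) : Prop := Gᶜ.IsClique A

/-- The independence number of a graph: the clique number of the complement. -/
noncomputable def indepNum {V : Type*} (G : SimpleGraph V) [Fintype V] : ℕ := Gᶜ.cliqueNum

/-- A vertex is bisimplicial if its neighborhood is the union of two cliques. -/
def Bisimplicial {V : Type*} (G : SimpleGraph V) (x : V) : Prop :=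
  ∃ A B : Set V, G.IsClique A ∧ G.IsClique B ∧ G.neighborSet x = A ∪ B

/-- `G` has a `K_k` minor: there are `k` pairwise disjoint connected branch sets,
pairwise joined by an edge. -/
def HasKMinor {V : Type*} (G : SimpleGraph V) (k : ℕ) : Prop :=
  ∃ f : Fin k → Set V,
    (Pairwise fun i j => Disjoint (f i) (f j)) ∧
    (∀ i, (G.induce (f i)).Connected) ∧
    (∀ i j, i ≠ j → ∃ u ∈ f i, ∃ v ∈ f j, G.Adj u v)

/-- A graph has an even hole if some even cycle of length at least 4 embeds in it
as an induced subgraph. -/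
def HasEvenHole {V : Type*} (G : SimpleGraph V) : Prop :=
  ∃ n : ℕ, 4 ≤ n ∧ Even n ∧ Nonempty (cycleGraph n ↪g G)

/-- A graph is even-hole-free if it has no even hole. -/
def EvenHoleFree {V : Type*} (G : SimpleGraph V) : Prop := ¬ HasEvenHole G

/-!
Write `U = V_1 ∪ ⋯ ∪ V_{r-1}` and `W = V_r ∪ ⋯ ∪ V_p`, so that `N(x) = U ∪ W`. Coloring `U` by its
classes and `W` injectively gives `p ≤ (r - 1) + |W| ≤ χ(G) - 2`; coloring `W` by its classes instead
shows `χ(G[U]) ≥ r - 1`, hence `χ(G[S]) ≥ r` for `S = {x} ∪ U`, since `x` is complete to `U`.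
For `T = V(G) ∖ S`, every neighbor of `x` in `T` lies in `W` and `|W| < χ(G) - r`, so a
`(χ(G) - r)`-coloring of `G[T]` leaves a color free for `x`; adding `r - 1` fresh colors for the
classes of `U` would then color `G` with `χ(G) - 1` colors.
-/

open Finset

theorem chromNum_le_iff_colorable {V : Type*} [Finite V] {G : SimpleGraph V} {k : ℕ} :
    chromNum G ≤ k ↔ G.Colorable k := by
  refine ⟨fun h => ?_, fun h => Nat.sInf_le h⟩
  have := Fintype.ofFinite V
  exact (Nat.sInf_mem (s := {n | G.Colorable n}) ⟨_, G.colorable_of_fintype⟩).mono h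

theorem colorable_chromNum {V : Type*} [Finite V] (G : SimpleGraph V) :
    G.Colorable (chromNum G) :=
  chromNum_le_iff_colorable.mp le_rfl

theorem chromNum_induce_univ {V : Type*} (G : SimpleGraph V) :
    chromNum (G.induce Set.univ) = chromNum G := by
  simp only [chromNum, colorable_congr G.induceUnivIso]

theorem Finset.biUnion_Iio_union_biUnion_Ici {ι α : Type*} [LinearOrder ι]
    [LocallyFiniteOrderBot ι] [LocallyFiniteOrderTop ι] (B : ι → Set α) (a : ι) :
    (⋃ i ∈ Iio a, B i) ∪ (⋃ i ∈ Ici a, B i) = ⋃ i, B i := by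
  rw [← set_biUnion_coe, ← set_biUnion_coe (Ici a), coe_Iio, coe_Ici, ← Set.biUnion_union,
    Set.Iio_union_Ici, Set.biUnion_univ]

namespace SimpleGraph

variable {V : Type*} {G : SimpleGraph V}

theorem colorable_induce_iff {A : Set V} {k : ℕ} :
    (G.induce A).Colorable k ↔
      ∃ c : V → ℕ, (∀ v ∈ A, c v < k) ∧ ∀ u ∈ A, ∀ v ∈ A, G.Adj u v → c u ≠ c v := by
  constructor
  · rintro ⟨c⟩
    refine ⟨fun v => if h : v ∈ A then c ⟨v, h⟩ else 0, fun v hv => by simp [hv],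
      fun u hu v hv huv => ?_⟩
    simpa [hu, hv, Fin.val_inj] using c.valid (show (G.induce A).Adj ⟨u, hu⟩ ⟨v, hv⟩ from huv)
  · rintro ⟨c, hlt, hvalid⟩
    exact ⟨Coloring.mk (fun v => ⟨c v, hlt v v.2⟩)
      fun {u v} huv h => hvalid u u.2 v v.2 huv (congrArg Fin.val h)⟩

theorem Colorable.induce_union {A B : Set V} {a b : ℕ} (hA : (G.induce A).Colorable a)
    (hB : (G.induce B).Colorable b) : (G.induce (A ∪ B)).Colorable (a + b) := by
  obtain ⟨c, hca, hcv⟩ := colorable_induce_iff.mp hA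
  obtain ⟨d, hdb, hdv⟩ := colorable_induce_iff.mp hB
  have hB_of_notMem : ∀ v ∈ A ∪ B, v ∉ A → v ∈ B := fun v hv hvA => hv.resolve_left hvA
  refine colorable_induce_iff.mpr ⟨fun v => if v ∈ A then c v else a + d v, fun v hv => ?_,
    fun u hu v hv huv => ?_⟩
  · by_cases hvA : v ∈ A
    · simp only [if_pos hvA]; have := hca v hvA; omega
    · simp only [if_neg hvA]; have := hdb v (hB_of_notMem v hv hvA); omega
  · by_cases huA : u ∈ A <;> by_cases hvA : v ∈ A <;> simp only [huA, hvA, if_true, if_false]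
    · exact hcv u huA v hvA huv
    · have := hca u huA; omega
    · have := hca v hvA; omega
    · have := hdv u (hB_of_notMem u hu huA) v (hB_of_notMem v hv hvA) huv; omega

theorem IsIndepSet.colorable_induce {A : Set V} (h : G.IsIndepSet A) :
    (G.induce A).Colorable 1 :=
  colorable_induce_iff.mpr ⟨0, fun _ _ => one_pos, fun _ hu _ hv huv => absurd huv (h hu hv huv.ne)⟩

theorem colorable_induce_biUnion_of_isIndepSet {ι : Type*} {s : Finset ι} {B : ι → Set V}
    (h : ∀ i ∈ s, G.IsIndepSet (B i)) : (G.induce (⋃ i ∈ s, B i)).Colorable #s := by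
  induction s using Finset.induction_on with
  | empty => exact colorable_induce_iff.mpr ⟨0, by simp, by simp⟩
  | insert i s hi ih =>
    rw [set_biUnion_insert, card_insert_of_notMem hi, add_comm]
    exact (h i (mem_insert_self i s)).colorable_induce.induce_union
      (ih fun j hj => h j (mem_insert_of_mem hj))

theorem colorable_induce_ncard {A : Set V} (hA : A.Finite) : (G.induce A).Colorable A.ncard := by
  have := hA.fintype
  rw [Set.ncard_eq_toFinset_card', Set.toFinset_card]
  exact (G.induce A).colorable_of_fintype

theorem Colorable.of_induce_insert_of_forall_adj {x : V} {A : Set V} {k : ℕ}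
    (hx : ∀ v ∈ A, G.Adj x v) (h : (G.induce (insert x A)).Colorable (k + 1)) :
    (G.induce A).Colorable k := by
  obtain ⟨c, hlt, hvalid⟩ := colorable_induce_iff.mp h
  have hne : ∀ v ∈ A, c v ≠ c x := fun v hv =>
    (hvalid x (Set.mem_insert x A) v (Set.mem_insert_of_mem x hv) (hx v hv)).symm
  have hcx := hlt x (Set.mem_insert x A)
  refine colorable_induce_iff.mpr ⟨fun v => if c v < c x then c v else c v - 1,
    fun v hv => ?_, fun u hu v hv huv => ?_⟩
  · have := hlt v (Set.mem_insert_of_mem x hv)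
    have := hne v hv
    dsimp only
    split_ifs <;> omega
  · have := hne u hu
    have := hne v hv
    have := hvalid u (Set.mem_insert_of_mem x hu) v (Set.mem_insert_of_mem x hv) huv
    dsimp only
    split_ifs <;> omega

theorem Colorable.induce_insert {x : V} {T : Set V} {k : ℕ} (hT : (G.induce T).Colorable k)
    (hfin : (G.neighborSet x ∩ T).Finite) (hdeg : (G.neighborSet x ∩ T).ncard < k) :
    (G.induce (insert x T)).Colorable k := by
  obtain ⟨c, hlt, hvalid⟩ := colorable_induce_iff.mp hT
  obtain ⟨j, hjk, hj⟩ : ∃ j < k, j ∉ c '' (G.neighborSet x ∩ T) := by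
    by_contra! hall
    have := Set.ncard_le_ncard (s := Set.Iio k) hall (hfin.image c)
    have := Set.ncard_image_le (f := c) hfin
    simp only [Set.ncard_Iio_nat] at *
    omega
  have hfree : ∀ v ∈ T, G.Adj x v → c v ≠ j := fun v hv hxv hcv => hj ⟨v, ⟨hxv, hv⟩, hcv⟩
  refine colorable_induce_iff.mpr ⟨fun v => if v = x then j else c v, fun v hv => ?_,
    fun u hu v hv huv => ?_⟩
  · dsimp only
    split_ifs with hvx
    · exact hjk
    · exact hlt v (hv.resolve_left hvx)
  · by_cases hux : u = x <;> by_cases hvx : v = x <;> simp only [hux, hvx, if_true, if_false]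
    · exact absurd (hux.trans hvx.symm) huv.ne
    · subst hux; exact (hfree v (hv.resolve_left hvx) huv).symm
    · subst hvx; exact hfree u (hu.resolve_left hux) huv.symm
    · exact hvalid u (hu.resolve_left hux) v (hv.resolve_left hvx) huv

variable [Finite V]

theorem chromNum_induce_union_le (A B : Set V) :
    chromNum (G.induce (A ∪ B)) ≤ chromNum (G.induce A) + chromNum (G.induce B) :=
  chromNum_le_iff_colorable.mpr ((colorable_chromNum _).induce_union (colorable_chromNum _))

theorem chromNum_induce_lt_of_forall_adj {x : V} {A : Set V} (hx : ∀ v ∈ A, G.Adj x v) :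
    chromNum (G.induce A) < chromNum (G.induce (insert x A)) := by
  obtain ⟨k, hk⟩ : ∃ k, chromNum (G.induce (insert x A)) = k + 1 := by
    refine Nat.exists_eq_succ_of_ne_zero fun h => ?_
    have := colorable_zero_iff.mp (h ▸ colorable_chromNum (G.induce (insert x A)))
    exact this.false ⟨x, Set.mem_insert x A⟩
  rw [hk, Nat.lt_succ_iff, chromNum_le_iff_colorable]
  exact Colorable.of_induce_insert_of_forall_adj hx (hk ▸ colorable_chromNum _)

theorem chromNum_induce_insert_le (x : V) (T : Set V) :
    chromNum (G.induce (insert x T)) ≤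
      max (chromNum (G.induce T)) ((G.neighborSet x ∩ T).ncard + 1) :=
  chromNum_le_iff_colorable.mpr <| ((colorable_chromNum _).mono (le_max_left _ _)).induce_insert
    (Set.toFinite _) (Nat.lt_of_lt_of_le (Nat.lt_succ_self _) (le_max_right _ _))

theorem chromNum_le_max_chromNum_induce_compl_insert_add (x : V) (U : Set V) :
    chromNum G ≤ max (chromNum (G.induce (insert x U)ᶜ))
      ((G.neighborSet x ∩ (insert x U)ᶜ).ncard + 1) + chromNum (G.induce U) :=
  calc chromNum G = chromNum (G.induce (insert x (insert x U)ᶜ ∪ U)) := by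
        rw [show insert x (insert x U)ᶜ ∪ U = Set.univ by ext v; simp; tauto, chromNum_induce_univ]
    _ ≤ _ := chromNum_induce_union_le _ U
    _ ≤ _ := Nat.add_le_add_right (chromNum_induce_insert_le x _) _

end SimpleGraph

theorem stmt_3_general {V : Type*} [Fintype V] (G : SimpleGraph V) (x : V)
    (p : ℕ) (hp : p = chromNum (G.induce (G.neighborSet x)))
    (Vc : Fin p → Set V)
    (hcover : (⋃ i, Vc i) = G.neighborSet x)
    (hindep : ∀ i, _root_.IsIndepSet G (Vc i))
    (r : ℕ) (hr2 : 2 ≤ r) (hrp : r ≤ p)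
    (hcard : (⋃ i ∈ {i : Fin p | r ≤ (i : ℕ) + 1}, Vc i).ncard ≤ chromNum G - r - 1) :
    p ≤ chromNum G - 2 ∧
    ∃ S T : Set V, S ∪ T = Set.univ ∧ Disjoint S T ∧
      r ≤ chromNum (G.induce S) ∧ chromNum G + 1 - r ≤ chromNum (G.induce T) := by
  obtain ⟨a, ha⟩ : ∃ a : Fin p, (a : ℕ) = r - 1 := ⟨⟨r - 1, by omega⟩, rfl⟩
  set U := ⋃ i ∈ Finset.Iio a, Vc i
  set W := ⋃ i ∈ {i : Fin p | r ≤ (i : ℕ) + 1}, Vc i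
  have hW : W = ⋃ i ∈ Finset.Ici a, Vc i := by
    ext v
    simp only [W, Set.mem_iUnion, Set.mem_ofPred_eq, Finset.mem_Ici, Fin.le_def, exists_prop]
    exact exists_congr fun i => and_congr_left' (by omega)
  have hUW : U ∪ W = G.neighborSet x := by
    rw [hW, Finset.biUnion_Iio_union_biUnion_Ici, hcover]
  have hclass (s : Finset (Fin p)) : chromNum (G.induce (⋃ i ∈ s, Vc i)) ≤ s.card :=
    chromNum_le_iff_colorable.mpr <|
      colorable_induce_biUnion_of_isIndepSet fun i _ => (isClique_compl (G := G)).mp (hindep i)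
  have hU : chromNum (G.induce U) ≤ r - 1 := by simpa [ha] using hclass (Finset.Iio a)
  have hWclass : chromNum (G.induce W) ≤ p - (r - 1) := by
    rw [hW]
    simpa [ha] using hclass (Finset.Ici a)
  have hWcard : chromNum (G.induce W) ≤ W.ncard :=
    chromNum_le_iff_colorable.mpr (colorable_induce_ncard W.toFinite)
  have hp_le : p ≤ chromNum (G.induce U) + chromNum (G.induce W) :=
    hp ▸ hUW ▸ chromNum_induce_union_le U W
  have hS : chromNum (G.induce U) < chromNum (G.induce (insert x U)) :=
    chromNum_induce_lt_of_forall_adj fun v hv => hUW.subset (Set.mem_union_left W hv)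
  have hNT : (G.neighborSet x ∩ (insert x U)ᶜ).ncard ≤ W.ncard :=
    Set.ncard_le_ncard (fun v ⟨hxv, hvS⟩ => (hUW.symm.subset hxv).resolve_left
      fun hvU => hvS (Set.mem_insert_of_mem x hvU)) W.toFinite
  have hG := chromNum_le_max_chromNum_induce_compl_insert_add (G := G) x U
  refine ⟨by omega, insert x U, (insert x U)ᶜ, Set.union_compl_self _, disjoint_compl_right,
    by omega, by omega⟩

/-- Key lemma: if the color classes `V_1 ⊇ ⋯ ⊇ V_p` (by size) of a proper
`p`-coloring of `G[N(x)]` satisfy `|V_r ∪ ⋯ ∪ V_p| ≤ χ(G) − r − 1` for some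
`2 ≤ r ≤ p`, then `p ≤ χ(G) − 2` and `G` is `(r, χ(G)+1−r)`-splittable. -/
theorem stmt_3 {V : Type*} [Fintype V] (G : SimpleGraph V) (x : V)
    (p : ℕ) (hp : p = chromNum (G.induce (G.neighborSet x))) (hp2 : 2 ≤ p)
    (Vc : Fin p → Set V)
    (hsub : ∀ i, Vc i ⊆ G.neighborSet x)
    (hcover : (⋃ i, Vc i) = G.neighborSet x)
    (hdisj : Pairwise fun i j => Disjoint (Vc i) (Vc j))
    (hindep : ∀ i, _root_.IsIndepSet G (Vc i))
    (hne : ∀ i, (Vc i).Nonempty)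
    (hmono : ∀ i j : Fin p, i ≤ j → (Vc j).ncard ≤ (Vc i).ncard)
    (r : ℕ) (hr2 : 2 ≤ r) (hrp : r ≤ p)
    (hcard : (⋃ i ∈ {i : Fin p | r ≤ (i : ℕ) + 1}, Vc i).ncard ≤ chromNum G - r - 1) :
    p ≤ chromNum G - 2 ∧
    ∃ S T : Set V, S ∪ T = Set.univ ∧ Disjoint S T ∧
      r ≤ chromNum (G.induce S) ∧ chromNum G + 1 - r ≤ chromNum (G.induce T) :=
  stmt_3_general G x p hp Vc hcover hindep r hr2 hrp hcard
end

section
/- Assume that every non-empty even-hole-free graph G satisfies χ(G) ≤ 2ω(G) − 1. Then for every integer k ≥ 7, every even-hole-free graph with no K_k minor is (2k−5)-colorable. -/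
open SimpleGraph Set

attribute [local instance] Classical.propDecidable

/-!
If `ω(G) ≤ k - 2`, the Chudnovsky–Seymour bound already gives `2k - 5` colors. Otherwise take a
minimal counterexample `G`, a `(k-1)`-clique `t` in it, and the component `D` of `G - t` through
some vertex outside `t`. If every vertex of `t` has a neighbour in `D`, contracting `D` produces a
`K_k` minor. Otherwise some `c ∈ t` has no neighbour in `D`, and the clique `t \ {c}` separates `D`
from the rest: both sides `V \ D` and `D ∪ (t \ {c})` are proper induced subgraphs, hence
`(2k-5)`-colorable, and since the two colorings are injective on the common clique they agree
after a permutation of the colors. If `t` is all of `V`, then `|V| = k - 1 ≤ 2k - 5`.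
-/

namespace SimpleGraph

variable {V W : Type*} {G : SimpleGraph V}

theorem Connected.induce_image {H : SimpleGraph W} (f : H →g G) {s : Set W}
    (h : (H.induce s).Connected) : (G.induce (f '' s)).Connected :=
  h.map (induceHom f (mapsTo_image f s)) (surjective_mapsTo_image_restrict f s)

theorem IsClique.injective_induce_coloring {α : Type*} {A K : Set V} (hK : G.IsClique K)
    (hKA : K ⊆ A) (C : (G.induce A).Coloring α) : Function.Injective fun x : K => C ⟨x, hKA x.2⟩ :=
  fun x y hxy => by_contra fun hne =>
    C.valid (v := ⟨x, hKA x.2⟩) (w := ⟨y, hKA y.2⟩) (hK x.2 y.2 (hne <| Subtype.ext ·)) hxy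

structure IsCliqueSeparation (G : SimpleGraph V) (A B : Set V) : Prop where
  union_eq_univ : A ∪ B = univ
  isClique_inter : G.IsClique (A ∩ B)
  not_adj : ∀ a ∈ A \ B, ∀ b ∈ B \ A, ¬ G.Adj a b

theorem isCliqueSeparation_compl_union {D K : Set V} (hK : G.IsClique K)
    (hD : ∀ u ∈ D, ∀ v ∉ D, G.Adj u v → v ∈ K) : G.IsCliqueSeparation Dᶜ (D ∪ K) where
  union_eq_univ := by rw [← union_assoc, compl_union_self, univ_union]
  isClique_inter := hK.subset fun v ⟨hvD, hv⟩ => hv.resolve_left hvD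
  not_adj a ha b hb hab := ha.2 (Or.inr (hD b (not_not.mp hb.2) a ha.1 hab.symm))

namespace IsCliqueSeparation

variable {A B : Set V}

theorem mem_right_of_notMem_left (hsep : G.IsCliqueSeparation A B) {v : V} (hv : v ∉ A) :
    v ∈ B :=
  (hsep.union_eq_univ ▸ mem_univ v).resolve_left hv

theorem mem_right_of_adj (hsep : G.IsCliqueSeparation A B) {a b : V} (hab : G.Adj a b)
    (ha : a ∉ A) : b ∈ B :=
  by_contra fun hb =>
    hsep.not_adj b ⟨by_contra fun hbA => hb (hsep.mem_right_of_notMem_left hbA), hb⟩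
      a ⟨hsep.mem_right_of_notMem_left ha, ha⟩ hab.symm

theorem colorable {n : ℕ} (hsep : G.IsCliqueSeparation A B)
    (hA : (G.induce A).Colorable n) (hB : (G.induce B).Colorable n) : G.Colorable n := by
  obtain ⟨φA⟩ := hA
  obtain ⟨φB⟩ := hB
  have hinjA := hsep.isClique_inter.injective_induce_coloring inter_subset_left φA
  have hinjB := hsep.isClique_inter.injective_induce_coloring inter_subset_right φB
  have : Finite ↥(A ∩ B) := .of_injective _ hinjA
  obtain ⟨σ, hσ⟩ := Equiv.Perm.exists_extending_pair _ _ hinjB hinjA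
  let φ : V → Fin n := fun v =>
    if hv : v ∈ A then φA ⟨v, hv⟩ else σ (φB ⟨v, hsep.mem_right_of_notMem_left hv⟩)
  have hφB : ∀ v (hv : v ∈ B), φ v = σ (φB ⟨v, hv⟩) := by
    intro v hv
    by_cases hvA : v ∈ A
    · simpa [φ, hvA] using (hσ ⟨v, hvA, hv⟩).symm
    · simp [φ, hvA]
  refine ⟨.mk φ fun {a b} hab => ?_⟩
  by_cases habA : a ∈ A ∧ b ∈ A
  · simpa [φ, habA.1, habA.2] using φA.valid (v := ⟨a, habA.1⟩) (w := ⟨b, habA.2⟩) hab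
  have habB : a ∈ B ∧ b ∈ B := by
    rcases not_and_or.mp habA with ha | hb
    · exact ⟨hsep.mem_right_of_notMem_left ha, hsep.mem_right_of_adj hab ha⟩
    · exact ⟨hsep.mem_right_of_adj hab.symm hb, hsep.mem_right_of_notMem_left hb⟩
  rw [hφB a habB.1, hφB b habB.2]
  exact σ.injective.ne (φB.valid (v := ⟨a, habB.1⟩) (w := ⟨b, habB.2⟩) hab)

end IsCliqueSeparation

theorem exists_component_compl_of_notMem {t : Set V} {w : V} (hw : w ∉ t) :
    ∃ D : Set V, w ∈ D ∧ Disjoint D t ∧ (G.induce D).Connected ∧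
      ∀ u ∈ D, ∀ v ∉ t, G.Adj u v → v ∈ D := by
  let C := (G.induce tᶜ).connectedComponentMk ⟨w, hw⟩
  refine ⟨(Embedding.induce tᶜ : G.induce tᶜ ↪g G) '' C.supp, ⟨_, rfl, rfl⟩, ?_, ?_, ?_⟩
  · rw [Set.disjoint_left]
    rintro _ ⟨v, -, rfl⟩
    exact v.2
  · exact C.maximal_connected_induce_supp.prop.induce_image (Embedding.induce tᶜ).toHom
  · rintro _ ⟨u, hu, rfl⟩ v hv huv
    refine ⟨⟨v, hv⟩, ?_, rfl⟩
    rw [ConnectedComponent.mem_supp_iff] at hu ⊢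
    exact hu ▸ ConnectedComponent.connectedComponentMk_eq_of_adj huv.symm

end SimpleGraph

section Minors

variable {V W : Type*} {G : SimpleGraph V}

theorem hasKMinor_of_branchSets {ι : Type*} [Fintype ι] (f : ι → Set V)
    (hdisj : Pairwise fun i j => Disjoint (f i) (f j)) (hconn : ∀ i, (G.induce (f i)).Connected)
    (hadj : ∀ i j, i ≠ j → ∃ u ∈ f i, ∃ v ∈ f j, G.Adj u v) : HasKMinor G (Fintype.card ι) :=
  let e := (Fintype.equivFin ι).symm
  ⟨f ∘ e, fun _ _ hij => hdisj (e.injective.ne hij), fun _ => hconn _,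
    fun _ _ hij => hadj _ _ (e.injective.ne hij)⟩

theorem HasKMinor.map {H : SimpleGraph W} {k : ℕ} (f : H ↪g G) (h : HasKMinor H k) :
    HasKMinor G k := by
  obtain ⟨b, hdisj, hconn, hadj⟩ := h
  refine ⟨fun i => f '' b i, fun i j hij => ?_, fun i => (hconn i).induce_image f.toHom,
    fun i j hij => ?_⟩
  · exact (disjoint_image_iff f.injective).mpr (hdisj hij)
  · obtain ⟨u, hu, v, hv, huv⟩ := hadj i j hij
    exact ⟨f u, mem_image_of_mem f hu, f v, mem_image_of_mem f hv, f.map_adj_iff.mpr huv⟩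

theorem hasKMinor_of_isClique_of_connected {t : Finset V} (ht : G.IsClique (t : Set V))
    {D : Set V} (hDt : Disjoint D t) (hD : (G.induce D).Connected)
    (hadj : ∀ x ∈ t, ∃ u ∈ D, G.Adj x u) : HasKMinor G (t.card + 1) := by
  have := hasKMinor_of_branchSets (G := G) (fun o : Option t => o.elim D fun x => {x.1})
    ?_ ?_ ?_
  · simpa using this
  · rintro (_ | x) (_ | y) hxy
    · exact absurd rfl hxy
    · exact disjoint_singleton_right.mpr fun h => hDt.ne_of_mem h y.2 rfl
    · exact disjoint_singleton_left.mpr fun h => hDt.ne_of_mem h x.2 rfl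
    · exact disjoint_singleton.mpr fun h => hxy (congrArg some (Subtype.ext h))
  · rintro (_ | x)
    · exact hD
    · simp
  · rintro (_ | x) (_ | y) hxy
    · exact absurd rfl hxy
    · obtain ⟨u, hu, hyu⟩ := hadj y y.2
      exact ⟨u, hu, y, rfl, hyu.symm⟩
    · obtain ⟨u, hu, hxu⟩ := hadj x x.2
      exact ⟨x, rfl, u, hu, hxu⟩
    · exact ⟨x, rfl, y, rfl, ht x.2 y.2 fun h => hxy (congrArg some (Subtype.ext h))⟩

theorem exists_isCliqueSeparation_of_not_hasKMinor {t : Finset V} (ht : G.IsClique (t : Set V))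
    (hM : ¬ HasKMinor G (t.card + 1)) {w : V} (hw : w ∉ t) :
    ∃ A B : Set V, G.IsCliqueSeparation A B ∧ A ≠ univ ∧ B ≠ univ := by
  obtain ⟨D, hwD, hDt, hD, hDclosed⟩ := G.exists_component_compl_of_notMem (t := t) hw
  obtain ⟨c, hct, hcD⟩ : ∃ c ∈ t, ∀ u ∈ D, ¬ G.Adj c u := by
    by_contra! hcover
    exact hM (hasKMinor_of_isClique_of_connected ht hDt hD hcover)
  have hsep : G.IsCliqueSeparation Dᶜ (D ∪ (↑t \ {c})) := by
    refine isCliqueSeparation_compl_union (ht.subset sdiff_subset) fun u hu v hvD huv => ⟨?_, ?_⟩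
    · exact by_contra fun hvt => hvD (hDclosed u hu v hvt huv)
    · rintro rfl
      exact hcD u hu huv.symm
  refine ⟨_, _, hsep, (ne_univ_iff_exists_notMem _).mpr ⟨w, not_not.mpr hwD⟩,
    (ne_univ_iff_exists_notMem _).mpr ⟨c, ?_⟩⟩
  rintro (hcD' | ⟨-, hcc⟩)
  · exact hDt.ne_of_mem hcD' hct rfl
  · exact hcc rfl

end Minors

theorem EvenHoleFree.induce {V : Type*} {G : SimpleGraph V} (h : EvenHoleFree G) (s : Set V) :
    EvenHoleFree (G.induce s) := fun ⟨n, h4, he, ⟨f⟩⟩ =>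
  h ⟨n, h4, he, ⟨(Embedding.induce s).comp f⟩⟩

theorem colorable_of_chromNum_le {V : Type*} [Fintype V] {G : SimpleGraph V} {n : ℕ}
    (h : chromNum G ≤ n) : G.Colorable n :=
  (Nat.sInf_mem (s := {m | G.Colorable m}) ⟨_, G.colorable_of_fintype⟩).mono h

theorem colorable_of_not_hasKMinor (P : ∀ {W : Type}, SimpleGraph W → Prop)
    (hP : ∀ {W : Type} (H : SimpleGraph W) (s : Set W), P H → P (H.induce s)) {k n : ℕ}
    (hkn : k ≤ n)
    (hsmall : ∀ (W : Type) [Fintype W] (H : SimpleGraph W), P H → H.cliqueNum < k →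
      H.Colorable n)
    (V : Type) [Fintype V] (G : SimpleGraph V) (hG : P G) (hM : ¬ HasKMinor G (k + 1)) :
    G.Colorable n := by
  induction hcard : Fintype.card V using Nat.strong_induction_on generalizing V with
  | _ N ih =>
  by_cases hω : G.cliqueNum < k
  · exact hsmall V G hG hω
  obtain ⟨s, hs⟩ := G.exists_isNClique_cliqueNum
  obtain ⟨t, hts, htk⟩ := Finset.exists_subset_card_eq (show k ≤ s.card by rw [hs.card_eq]; omega)
  have ht : G.IsClique (t : Set V) := hs.isClique.subset (by exact_mod_cast hts)
  by_cases hcover : ∀ w, w ∈ t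
  · refine G.colorable_of_fintype.mono ?_
    rw [← Finset.card_univ, ← Finset.eq_univ_of_forall hcover, htk]
    exact hkn
  obtain ⟨w, hw⟩ := not_forall.mp hcover
  obtain ⟨A, B, hsep, hA, hB⟩ := exists_isCliqueSeparation_of_not_hasKMinor ht (htk ▸ hM) hw
  have colorable_induce : ∀ S : Set V, S ≠ univ → (G.induce S).Colorable n := fun S hS => by
    obtain ⟨x, hx⟩ := (ne_univ_iff_exists_notMem S).mp hS
    exact ih _ (hcard ▸ Fintype.card_subtype_lt hx) S (G.induce S) (hP G S hG)
      (fun h => hM (h.map (Embedding.induce S))) rfl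
  exact hsep.colorable (colorable_induce A hA) (colorable_induce B hB)

/-- Assuming the Chudnovsky–Seymour bound `χ ≤ 2ω − 1` for non-empty
even-hole-free graphs, for every `k ≥ 7` every even-hole-free graph with no
`K_k` minor is `(2k−5)`-colorable. -/
theorem stmt_4
    (hCS : ∀ (W : Type) [Fintype W] (H : SimpleGraph W), Nonempty W →
      EvenHoleFree H → chromNum H ≤ 2 * H.cliqueNum - 1) :
    ∀ (k : ℕ), 7 ≤ k →
      ∀ (V : Type) [Fintype V] (G : SimpleGraph V),
        EvenHoleFree G → ¬ HasKMinor G k → G.Colorable (2 * k - 5) := by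
  rintro k hk V _ G hG hM
  obtain ⟨m, rfl⟩ : ∃ m, k = m + 1 := ⟨k - 1, by omega⟩
  refine colorable_of_not_hasKMinor @EvenHoleFree (fun _ s hH => hH.induce s)
    (by omega) (fun W _ H hH hω => ?_) V G hG hM
  cases isEmpty_or_nonempty W
  · exact .of_isEmpty _
  · exact colorable_of_chromNum_le ((hCS W H ‹_› hH).trans (by omega))
end

section
/- Every graph with minimum degree at least 4 has a K_4 minor. -/
open SimpleGraph Set

attribute [local instance] Classical.propDecidable

/-!
Mader's argument: if the edges of `H` lie inside a set of `n ≥ 2` vertices and there are at least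
`2n - 2` of them, then `H` has a `K₄` minor. For `n ≤ 3` there are too many edges. If some edge `xy`
lies in at most one triangle, contracting it loses one vertex and at most two edges, and a `K₄`
minor of the contraction lifts to `H`. Otherwise every edge lies in two triangles, so the
neighbourhood of a non-isolated vertex `v` induces a graph of minimum degree two; a longest path
there closes up to a cycle, and `v` with this cycle is a wheel, which contracts to `K₄`.
Minimum degree four gives `2n` edges.
-/

def SimpleGraph.contract {V ι : Type*} (G : SimpleGraph V) (f : ι → Set V) : SimpleGraph ι where
  Adj i j := i ≠ j ∧ ∃ u ∈ f i, ∃ v ∈ f j, G.Adj u v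
  symm := ⟨fun _ _ ⟨hne, u, hu, v, hv, huv⟩ => ⟨hne.symm, v, hv, u, hu, huv.symm⟩⟩
  loopless := ⟨fun _ h => h.1 rfl⟩

section Contract

variable {V ι : Type*} {G : SimpleGraph V} {f : ι → Set V}

theorem SimpleGraph.preconnected_induce_biUnion
    (hf : ∀ i, (f i).Nonempty → (G.induce (f i)).Connected) {S : Set ι}
    (hS : ((G.contract f).induce S).Preconnected) :
    (G.induce (⋃ i ∈ S, f i)).Preconnected := by
  have hsub : ∀ i ∈ S, f i ⊆ ⋃ i ∈ S, f i := fun i hi => subset_biUnion_of_mem hi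
  have hreach : ∀ (i : S) {u w} (hu : u ∈ f i) (hw : w ∈ f i),
      (G.induce (⋃ i ∈ S, f i)).Reachable ⟨u, hsub i i.2 hu⟩ ⟨w, hsub i i.2 hw⟩ :=
    fun i u w hu hw =>
      ((hf i ⟨u, hu⟩).preconnected ⟨u, hu⟩ ⟨w, hw⟩).map (G.induceHomOfLE (hsub i i.2)).toHom
  rintro ⟨u, hu⟩ ⟨w, hw⟩
  obtain ⟨i, hi, hui⟩ := mem_iUnion₂.mp hu
  obtain ⟨j, hj, hwj⟩ := mem_iUnion₂.mp hw
  suffices ∀ j : S, Relation.ReflTransGen ((G.contract f).induce S).Adj ⟨i, hi⟩ j →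
      ∀ w (hw : w ∈ f j),
      (G.induce (⋃ i ∈ S, f i)).Reachable ⟨u, hsub i hi hui⟩ ⟨w, hsub j j.2 hw⟩ from
    this ⟨j, hj⟩ ((reachable_iff_reflTransGen _ _).mp (hS _ _)) w hwj
  intro j hij
  induction hij with
  | refl => exact fun w hw => hreach ⟨i, hi⟩ hui hw
  | tail _ hjk ih =>
    obtain ⟨-, a, ha, b, hb, hab⟩ := hjk
    have hab' : (G.induce (⋃ i ∈ S, f i)).Adj ⟨a, hsub _ (Subtype.prop _) ha⟩
        ⟨b, hsub _ (Subtype.prop _) hb⟩ := hab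
    exact fun w hw => ((ih a ha).trans hab'.reachable).trans (hreach _ hb hw)

theorem HasKMinor.of_contract (hdisj : Pairwise fun i j => Disjoint (f i) (f j))
    (hf : ∀ i, (f i).Nonempty → (G.induce (f i)).Connected) {k : ℕ} (hk : 2 ≤ k)
    (h : HasKMinor (G.contract f) k) : HasKMinor G k := by
  obtain ⟨g, hgdisj, hgconn, hgadj⟩ := h
  have : Nontrivial (Fin k) := Fin.nontrivial_iff_two_le.mpr hk
  refine ⟨fun i => ⋃ j ∈ g i, f j, fun i i' hii' => ?_, fun i => ?_, fun i i' hii' => ?_⟩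
  · simp only [disjoint_iUnion₂_left, disjoint_iUnion₂_right]
    exact fun j hj j' hj' => hdisj ((hgdisj hii').ne_of_mem hj' hj)
  · obtain ⟨i', hi'⟩ := exists_ne i
    obtain ⟨j, hj, -, -, -, u, hu, -⟩ := hgadj i i' hi'.symm
    exact (connected_iff _).mpr ⟨preconnected_induce_biUnion hf (hgconn i).preconnected,
      ⟨u, mem_iUnion₂.mpr ⟨j, hj, hu⟩⟩⟩
  · obtain ⟨j, hj, j', hj', -, u, hu, v, hv, huv⟩ := hgadj i i' hii'
    exact ⟨u, mem_iUnion₂.mpr ⟨j, hj, hu⟩, v, mem_iUnion₂.mpr ⟨j', hj', hv⟩, huv⟩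

end Contract

/-- `y` is merged into `x` and left isolated, so that the vertex type does not change. -/
def SimpleGraph.contractEdge {ι : Type*} (H : SimpleGraph ι) (x y : ι) : SimpleGraph ι :=
  H.contract fun i => {u | i ≠ y ∧ (u = i ∨ i = x ∧ u = y)}

section ContractEdge

variable {ι : Type*} {H : SimpleGraph ι} {x y : ι}

theorem SimpleGraph.contractEdge_adj_of_adj {a b : ι} (ha : a ≠ y) (hb : b ≠ y) (h : H.Adj a b) :
    (H.contractEdge x y).Adj a b :=
  ⟨h.ne, a, ⟨ha, Or.inl rfl⟩, b, ⟨hb, Or.inl rfl⟩, h⟩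

theorem SimpleGraph.contractEdge_adj_of_adj_right {z : ι} (hxy : x ≠ y) (hxz : x ≠ z)
    (h : H.Adj y z) : (H.contractEdge x y).Adj x z :=
  ⟨hxz, y, ⟨hxy, Or.inr ⟨rfl, rfl⟩⟩, z, ⟨h.ne.symm, Or.inl rfl⟩, h⟩

theorem SimpleGraph.support_contractEdge_subset (hxy : H.Adj x y) :
    (H.contractEdge x y).support ⊆ H.support \ {y} := by
  rintro a ⟨b, -, u, ⟨hay, rfl | ⟨rfl, -⟩⟩, w, -, huw⟩
  · exact ⟨⟨w, huw⟩, hay⟩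
  · exact ⟨⟨y, hxy⟩, hay⟩

theorem HasKMinor.of_contractEdge (hxy : H.Adj x y) {k : ℕ} (hk : 2 ≤ k)
    (h : HasKMinor (H.contractEdge x y) k) : HasKMinor H k := by
  refine h.of_contract (fun i j hij => Set.disjoint_left.mpr ?_) (fun i hi => ?_) hk
  · rintro u ⟨hiy, hui⟩ ⟨hjy, huj⟩
    grind
  · have hiy : i ≠ y := hi.elim fun _ hu => hu.1
    by_cases hix : i = x
    · rw [show {u | i ≠ y ∧ (u = i ∨ i = x ∧ u = y)} = {x, y} by ext u; simp [hix, hxy.ne]]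
      exact induce_pair_connected_of_adj hxy
    · rw [show {u | i ≠ y ∧ (u = i ∨ i = x ∧ u = y)} = {i} by ext u; simp [hiy, hix]]
      exact Connected.of_subsingleton

open Finset in
theorem SimpleGraph.card_edgeFinset_le_card_edgeFinset_contractEdge [Fintype ι]
    (hxy : H.Adj x y) :
    #H.edgeFinset ≤
      #(H.contractEdge x y).edgeFinset + 1 + #(H.neighborFinset x ∩ H.neighborFinset y) := by
  set Nx := H.neighborFinset x
  set Ny := H.neighborFinset y
  set new := (Ny \ insert x Nx).image fun z => s(x, z)
  have hsub : (H.deleteIncidenceSet y).edgeFinset ∪ new ⊆ (H.contractEdge x y).edgeFinset := by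
    refine Finset.union_subset (fun e he => ?_) (fun e he => ?_)
    · induction e with | h a b => ?_
      simp only [mem_edgeFinset, mem_edgeSet, deleteIncidenceSet_adj] at he ⊢
      exact contractEdge_adj_of_adj he.2.1 he.2.2 he.1
    · obtain ⟨z, hz, rfl⟩ := Finset.mem_image.mp he
      simp only [Nx, Ny, Finset.mem_sdiff, Finset.mem_insert, mem_neighborFinset, not_or] at hz
      simpa using contractEdge_adj_of_adj_right hxy.ne (Ne.symm hz.2.1) hz.1
  have hdisj : Disjoint (H.deleteIncidenceSet y).edgeFinset new := by
    refine Finset.disjoint_left.mpr fun e he hnew => ?_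
    obtain ⟨z, hz, rfl⟩ := Finset.mem_image.mp hnew
    simp only [Nx, Ny, Finset.mem_sdiff, Finset.mem_insert, mem_neighborFinset, not_or] at hz
    simp only [mem_edgeFinset, mem_edgeSet, deleteIncidenceSet_adj] at he
    exact hz.2.2 he.1
  have hnew : #new = #(Ny \ insert x Nx) :=
    Finset.card_image_of_injective _ fun a b hab => Sym2.congr_right.mp hab
  have hcommon : #(insert x Nx ∩ Ny) ≤ #(Nx ∩ Ny) + 1 := by
    refine (Finset.card_le_card fun z hz => ?_).trans (Finset.card_insert_le x (Nx ∩ Ny))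
    simp only [Finset.mem_inter, Finset.mem_insert] at hz ⊢
    tauto
  have hdeg : H.degree y ≤ #H.edgeFinset := by
    rw [← card_incidenceFinset_eq_degree]
    exact Finset.card_le_card (H.incidenceFinset_subset y)
  have := Finset.card_le_card hsub
  rw [Finset.card_union_of_disjoint hdisj, hnew, Finset.card_sdiff,
    card_edgeFinset_deleteIncidenceSet] at this
  have : #Ny = H.degree y := card_neighborFinset_eq_degree H y
  omega

end ContractEdge

theorem SimpleGraph.Walk.IsPath.exists_forall_adj_start_mem_support {V : Type*} [Fintype V]
    {G : SimpleGraph V} {S : Set V} {u w : V} {p : G.Walk u w} (hp : p.IsPath)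
    (hpS : ∀ x ∈ p.support, x ∈ S) :
    ∃ (u' : V) (q : G.Walk u' w), q.IsPath ∧ (∀ x ∈ q.support, x ∈ S) ∧
      ∀ x ∈ S, G.Adj u' x → x ∈ q.support := by
  by_cases hmax : ∀ x ∈ S, G.Adj u x → x ∈ p.support
  · exact ⟨u, p, hp, hpS, hmax⟩
  push Not at hmax
  obtain ⟨x, hxS, hux, hxp⟩ := hmax
  have hp' : (cons hux.symm p).IsPath := hp.cons hxp
  have := hp'.length_lt
  exact hp'.exists_forall_adj_start_mem_support
    (by simpa [support_cons] using ⟨hxS, hpS⟩)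
termination_by Fintype.card V - p.length
decreasing_by simp only [length_cons] at this ⊢; omega

theorem hasKMinor_four_of_triangle {V : Type*} {G : SimpleGraph V} {a b c : V}
    (hab : G.Adj a b) (hac : G.Adj a c) (hbc : G.Adj b c) {T : Set V}
    (hT : (G.induce T).Connected) (ha : a ∉ T) (hb : b ∉ T) (hc : c ∉ T)
    (haT : ∃ t ∈ T, G.Adj a t) (hbT : ∃ t ∈ T, G.Adj b t) (hcT : ∃ t ∈ T, G.Adj c t) :
    HasKMinor G 4 := by
  obtain ⟨ta, hta, hata⟩ := haT
  obtain ⟨tb, htb, hbtb⟩ := hbT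
  obtain ⟨tc, htc, hctc⟩ := hcT
  refine ⟨![{a}, {b}, {c}, T], fun i j hij => ?_, fun i => ?_, fun i j hij => ?_⟩
  · fin_cases i <;> fin_cases j <;> simp_all [hab.ne, hac.ne, hbc.ne, hab.ne', hac.ne', hbc.ne']
  · fin_cases i <;> dsimp <;> first | exact hT | exact Connected.of_subsingleton
  · fin_cases i <;> fin_cases j <;> simp_all [hab.symm, hac.symm, hbc.symm]
    all_goals first
      | exact ⟨ta, hta, hata⟩ | exact ⟨tb, htb, hbtb⟩ | exact ⟨tc, htc, hctc⟩
      | exact ⟨ta, hta, hata.symm⟩ | exact ⟨tb, htb, hbtb.symm⟩ | exact ⟨tc, htc, hctc.symm⟩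

open Finset in
theorem hasKMinor_four_of_forall_adj_one_lt_card_inter {V : Type*} [Fintype V]
    {G : SimpleGraph V} {v a : V} (hva : G.Adj v a)
    (h : ∀ x, G.Adj v x → 1 < #(G.neighborFinset v ∩ G.neighborFinset x)) :
    HasKMinor G 4 := by
  -- a longest path in the neighbourhood of `v`: the neighbours there of its start `u` lie on it
  obtain ⟨u, q, hq, hqN, hqmax⟩ :=
    (Walk.IsPath.nil (G := G) (u := a)).exists_forall_adj_start_mem_support
      (S := G.neighborSet v) (by simpa using hva)
  have hvu : G.Adj v u := hqN u q.start_mem_support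
  obtain ⟨z, hz1, z', hz2, hzz'⟩ := Finset.one_lt_card.mp (h u hvu)
  simp only [Finset.mem_inter, mem_neighborFinset] at hz1 hz2
  cases q with
  | nil => exact absurd (by simpa using hqmax z hz1.1 hz1.2) hz1.2.ne'
  | @cons _ u₁ _ huu₁ q₁ =>
  obtain ⟨w, hvw, huw, hwu₁⟩ : ∃ w, G.Adj v w ∧ G.Adj u w ∧ w ≠ u₁ := by
    by_cases hzu₁ : z = u₁
    · exact ⟨z', hz2.1, hz2.2, hzu₁ ▸ hzz'.symm⟩
    · exact ⟨z, hz1.1, hz1.2, hzu₁⟩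
  have hwq₁ : w ∈ q₁.support := by
    simpa [huw.ne'] using hqmax w hvw huw
  cases q₁ with
  | nil => exact absurd (by simpa using hwq₁) hwu₁
  | @cons _ u₂ _ hu₁u₂ q₂ =>
  rw [Walk.cons_isPath_iff, Walk.cons_isPath_iff, Walk.support_cons] at hq
  simp only [Walk.support_cons, List.mem_cons, forall_eq_or_imp] at hqN
  -- the wheel: the triangle `v u u₁` and the rest of the path, which meets `u` at `w`
  refine hasKMinor_four_of_triangle hvu hqN.2.1 huu₁ q₂.connected_induce_support
    (fun hv => (hqN.2.2 v hv).ne rfl) (fun hu => hq.2 (List.mem_cons_of_mem _ hu))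
    (fun hu₁ => hq.1.2 hu₁)
    ⟨u₂, q₂.start_mem_support, hqN.2.2 u₂ q₂.start_mem_support⟩
    ⟨w, by simpa [hwu₁] using hwq₁, huw⟩ ⟨u₂, q₂.start_mem_support, hu₁u₂⟩

open Finset in
theorem hasKMinor_four_of_two_mul_card_le {ι : Type*} [Fintype ι] (H : SimpleGraph ι)
    (A : Finset ι) (hA : H.support ⊆ A) (hA₂ : 2 ≤ #A) (hE : 2 * #A ≤ #H.edgeFinset + 2) :
    HasKMinor H 4 := by
  obtain ⟨n, hn⟩ : ∃ n, #A = n := ⟨_, rfl⟩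
  induction n generalizing H A with
  | zero => omega
  | succ n ih =>
  by_cases hsmall : #A ≤ 3
  · have hchoose : #H.edgeFinset ≤ (#A).choose 2 := by
      rw [← card_edgeFinset_induce_of_support_subset hA]
      convert card_edgeFinset_le_card_choose_two using 2
      exact (Fintype.card_coe A).symm
    interval_cases #A <;> simp at hchoose <;> omega
  by_cases hcontract : ∃ x y, H.Adj x y ∧ #(H.neighborFinset x ∩ H.neighborFinset y) ≤ 1
  · obtain ⟨x, y, hxy, hxy₁⟩ := hcontract
    have hyA : y ∈ A := hA ⟨x, hxy.symm⟩
    have hE' := card_edgeFinset_le_card_edgeFinset_contractEdge hxy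
    refine (ih (H.contractEdge x y) (A.erase y) ?_ ?_ ?_ ?_).of_contractEdge hxy (by norm_num)
    · rw [coe_erase]
      exact (support_contractEdge_subset hxy).trans (Set.sdiff_subset_sdiff_left hA)
    all_goals rw [card_erase_of_mem hyA]; omega
  · push Not at hcontract
    obtain ⟨e, he⟩ := Finset.card_pos.mp (by omega : 0 < #H.edgeFinset)
    induction e with | h v a => ?_
    exact hasKMinor_four_of_forall_adj_one_lt_card_inter (mem_edgeFinset.mp he)
      fun x hvx => hcontract v x hvx

theorem stmt_10_general {V : Type*} [Fintype V] (G : SimpleGraph V)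
    (h : 4 ≤ G.minDegree) :
    HasKMinor G 4 := by
  have hdeg : ∀ v, 4 ≤ G.degree v := fun v => h.trans (G.minDegree_le_degree v)
  rcases isEmpty_or_nonempty V with hV | ⟨⟨v⟩⟩
  · simp at h
  have hV : 4 < Fintype.card V := (hdeg v).trans_lt (G.degree_lt_card_verts v)
  have hE : Fintype.card V * 4 ≤ 2 * G.edgeFinset.card := by
    rw [← G.sum_degrees_eq_twice_card_edges, ← Finset.card_univ, ← smul_eq_mul]
    exact Finset.card_nsmul_le_sum _ _ _ fun v _ => hdeg v
  refine hasKMinor_four_of_two_mul_card_le G Finset.univ (by simp) ?_ ?_ <;>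
    rw [Finset.card_univ] <;> omega

/-- Every graph with minimum degree at least 4 has a `K_4` minor. -/
theorem stmt_10 {V : Type*} [Fintype V] (G : SimpleGraph V) [Nonempty V]
    (h : 4 ≤ G.minDegree) :
    HasKMinor G 4 :=
  stmt_10_general G h
end

section
/- Every graph on n ≥ 4 vertices with at least 2n − 2 edges has a K_4 minor. -/
open SimpleGraph Set

attribute [local instance] Classical.propDecidable

/-! Induct on the number `n` of vertices carrying edges, after discarding edges until exactly
`2n - 2` remain. The degree sum `4n - 4` then forces a vertex `v` of degree at most `3`. If
`deg v ≤ 2`, deleting `v` preserves the edge bound for `n - 1`. If `deg v = 3` and the neighbours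
of `v` form a triangle, they span a `K_4` together with `v`; otherwise contracting an edge `vx`,
with `x` non-adjacent to another neighbour `y`, loses the three edges at `v` but gains `xy`, so the
bound holds for `n - 1` again, and a `K_4` minor of the contraction lifts to the graph. Graphs on
two or three vertices cannot carry `2n - 2` edges, which ends the induction. -/

namespace SimpleGraph

variable {V : Type*} {G H : SimpleGraph V} {v a : V}

lemma exists_le_card_edgeFinset_eq [Fintype V] (G : SimpleGraph V) {k : ℕ}
    (hk : k ≤ G.edgeFinset.card) : ∃ H ≤ G, H.edgeFinset.card = k := by
  obtain ⟨t, hts, htc⟩ := Finset.exists_subset_card_eq (Nat.sub_le G.edgeFinset.card k)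
  refine ⟨G.deleteEdges t, G.deleteEdges_le t, ?_⟩
  rw [edgeFinset_deleteEdges, Finset.card_sdiff_of_subset hts, htc]
  omega

lemma card_edgeFinset_le_choose_two_of_support_subset [Fintype V] {s : Finset V}
    (hs : G.support ⊆ s) : G.edgeFinset.card ≤ s.card.choose 2 := by
  rw [← card_edgeFinset_induce_of_support_subset hs]
  convert card_edgeFinset_le_card_choose_two (G := G.induce s)
  simp

lemma sum_degree_eq_twice_card_edges_of_support_subset [Fintype V] {s : Finset V}
    (hs : G.support ⊆ s) : ∑ v ∈ s, G.degree v = 2 * G.edgeFinset.card := by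
  rw [← sum_degrees_eq_twice_card_edges]
  refine Finset.sum_subset (Finset.subset_univ s) fun v _ hv => ?_
  rw [degree_eq_zero_iff_notMem_support]
  exact fun h => hv (hs h)

lemma not_cliqueFree_succ_of_isClique_neighborSet [Fintype (G.neighborSet v)]
    (h : G.IsClique (G.neighborSet v)) : ¬ G.CliqueFree (G.degree v + 1) := by
  have hN : G.IsNClique (G.degree v) (G.neighborFinset v) :=
    ⟨by rwa [coe_neighborFinset], card_neighborFinset_eq_degree G v⟩
  exact fun hfree => hfree _ (hN.insert fun b hb => (mem_neighborFinset G v b).1 hb)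

/-- The contraction of the edge `va` onto `a`. To keep the vertex type, `v` stays behind as an
isolated vertex. -/
def contract_s11 (G : SimpleGraph V) (v a : V) : SimpleGraph V where
  Adj u w := u ≠ w ∧ u ≠ v ∧ w ≠ v ∧ (G.Adj u w ∨ u = a ∧ G.Adj v w ∨ w = a ∧ G.Adj v u)
  symm := ⟨fun u w ⟨huw, hu, hw, h⟩ => ⟨huw.symm, hw, hu, by rw [G.adj_comm]; tauto⟩⟩
  loopless := ⟨fun _ h => h.1 rfl⟩

lemma not_contract_adj_left {w : V} : ¬ (G.contract_s11 v a).Adj v w := fun h => h.2.1 rfl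

lemma deleteIncidenceSet_le_contract : G.deleteIncidenceSet v ≤ G.contract_s11 v a := by
  intro u w h
  rw [deleteIncidenceSet_adj] at h
  exact ⟨h.1.ne, h.2.1, h.2.2, Or.inl h.1⟩

lemma support_contract_subset (hva : G.Adj v a) :
    (G.contract_s11 v a).support ⊆ G.support \ {v} := by
  rintro u ⟨w, -, hu, -, h | ⟨rfl, -⟩ | ⟨-, h⟩⟩
  · exact ⟨⟨w, h⟩, hu⟩
  · exact ⟨⟨v, hva.symm⟩, hu⟩
  · exact ⟨⟨v, h.symm⟩, hu⟩

lemma card_edgeFinset_sub_degree_lt_contract [Fintype V] {x y : V} (hvx : G.Adj v x)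
    (hvy : G.Adj v y) (hxy : x ≠ y) (hn : ¬ G.Adj x y) :
    G.edgeFinset.card - G.degree v < (G.contract_s11 v x).edgeFinset.card := by
  have hsub : insert s(x, y) (G.deleteIncidenceSet v).edgeFinset ⊆ (G.contract_s11 v x).edgeFinset := by
    refine Finset.insert_subset ?_ (edgeFinset_mono deleteIncidenceSet_le_contract)
    rw [mem_edgeFinset, mem_edgeSet]
    exact ⟨hxy, hvx.ne', hvy.ne', Or.inr (Or.inl ⟨rfl, hvy⟩)⟩
  have hxy_new : s(x, y) ∉ (G.deleteIncidenceSet v).edgeFinset := by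
    rw [mem_edgeFinset, mem_edgeSet, deleteIncidenceSet_adj]
    exact fun h => hn h.1
  have := Finset.card_le_card hsub
  rw [Finset.card_insert_of_notMem hxy_new, card_edgeFinset_deleteIncidenceSet] at this
  omega

lemma Reachable.induce_of_forall_adj {S T : Set V} (hST : S ⊆ T)
    (hadj : ∀ x y : S, H.Adj x y →
      (G.induce T).Reachable (Set.inclusion hST x) (Set.inclusion hST y))
    {x y : S} (h : (H.induce S).Reachable x y) :
    (G.induce T).Reachable (Set.inclusion hST x) (Set.inclusion hST y) := by
  rw [reachable_iff_reflTransGen] at h ⊢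
  exact h.lift' (Set.inclusion hST) fun x y hxy => (reachable_iff_reflTransGen _ _).1 (hadj x y hxy)

lemma connected_induce_insert_of_contract (hva : G.Adj v a) {S : Set V}
    (hS : ((G.contract_s11 v a).induce S).Connected) (haS : a ∈ S) :
    (G.induce (insert v S)).Connected := by
  have hv : v ∈ insert v S := mem_insert v S
  have ha : a ∈ insert v S := mem_insert_of_mem v haS
  have hreach : ∀ {x y} (hx : x ∈ insert v S) (hy : y ∈ insert v S), G.Adj x y →
      (G.induce (insert v S)).Reachable ⟨x, hx⟩ ⟨y, hy⟩ := fun _ _ h => Adj.reachable h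
  have hlift : ∀ x y : S, (G.contract_s11 v a).Adj x y → (G.induce (insert v S)).Reachable
      (Set.inclusion (subset_insert v S) x) (Set.inclusion (subset_insert v S) y) := by
    rintro ⟨x, hx⟩ ⟨y, hy⟩ ⟨-, -, -, h | ⟨rfl, h⟩ | ⟨rfl, h⟩⟩
    · exact hreach _ _ h
    · exact (hreach _ hv hva.symm).trans (hreach hv _ h)
    · exact (hreach _ hv h.symm).trans (hreach hv _ hva)
  refine (connected_iff_exists_forall_reachable _).2 ⟨⟨a, ha⟩, ?_⟩
  rintro ⟨x, rfl | hx⟩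
  · exact (hreach hv ha hva).symm
  · exact Reachable.induce_of_forall_adj (subset_insert v S) hlift
      (hS.preconnected ⟨a, haS⟩ ⟨x, hx⟩)

end SimpleGraph

section Minor

variable {V : Type*} {G H : SimpleGraph V} {k : ℕ}

theorem HasKMinor.mono (hGH : G ≤ H) (h : HasKMinor G k) : HasKMinor H k := by
  obtain ⟨f, hdisj, hconn, hadj⟩ := h
  refine ⟨f, hdisj, fun i => (hconn i).mono fun _ _ h => hGH h, fun i j hij => ?_⟩
  obtain ⟨u, hu, w, hw, huw⟩ := hadj i j hij
  exact ⟨u, hu, w, hw, hGH huw⟩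

theorem hasKMinor_of_not_cliqueFree (h : ¬ G.CliqueFree k) : HasKMinor G k := by
  obtain ⟨φ⟩ := (not_cliqueFree_iff_top_isContained k).1 h
  refine ⟨fun i => {φ i}, fun i j hij => Set.disjoint_singleton.2 (φ.injective.ne hij),
    fun i => ?_, fun i j hij => ⟨φ i, rfl, φ j, rfl, φ.toHom.map_adj hij⟩⟩
  rw [induce_singleton_eq_top]
  exact connected_top

theorem HasKMinor.of_contract_s11 {v a : V} (hva : G.Adj v a) (hk : 2 ≤ k)
    (h : HasKMinor (G.contract_s11 v a) k) : HasKMinor G k := by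
  obtain ⟨f, hdisj, hconn, hadj⟩ := h
  have hvf : ∀ i, v ∉ f i := by
    intro i hvi
    have : Nontrivial (Fin k) := Fin.nontrivial_iff_two_le.2 hk
    obtain ⟨j, hji⟩ := exists_ne i
    obtain ⟨u, hu, w, -, huw⟩ := hadj i j hji.symm
    have huv : u ≠ v := by rintro rfl; exact not_contract_adj_left huw
    have : Nontrivial (f i) := ⟨⟨⟨v, hvi⟩, ⟨u, hu⟩, fun h => huv (congrArg Subtype.val h).symm⟩⟩
    obtain ⟨x, hx⟩ := (hconn i).preconnected.exists_adj_of_nontrivial ⟨v, hvi⟩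
    exact not_contract_adj_left hx
  -- `v` joins the branch set containing `a`.
  set g : Fin k → Set V := fun i => {x | x ∈ f i ∨ x = v ∧ a ∈ f i}
  refine ⟨g, fun i j hij => Set.disjoint_left.2 ?_, fun i => ?_, fun i j hij => ?_⟩
  · rintro x (hxi | ⟨rfl, hai⟩) (hxj | ⟨hxv, haj⟩)
    · exact Set.disjoint_left.1 (hdisj hij) hxi hxj
    · exact hvf i (hxv ▸ hxi)
    · exact hvf j hxj
    · exact Set.disjoint_left.1 (hdisj hij) hai haj
  · by_cases hai : a ∈ f i
    · have : g i = insert v (f i) := by ext x; simp [g, hai, or_comm]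
      rw [this]
      exact connected_induce_insert_of_contract hva (hconn i) hai
    · have : g i = f i := by ext x; simp [g, hai]
      rw [this]
      refine (hconn i).mono ?_
      rintro ⟨x, hx⟩ ⟨y, hy⟩ ⟨-, -, -, h | ⟨rfl, -⟩ | ⟨rfl, -⟩⟩
      · exact h
      · exact absurd hx hai
      · exact absurd hy hai
  · obtain ⟨u, hu, w, hw, -, -, -, h | ⟨rfl, h⟩ | ⟨rfl, h⟩⟩ := hadj i j hij
    · exact ⟨u, Or.inl hu, w, Or.inl hw, h⟩
    · exact ⟨v, Or.inr ⟨rfl, hu⟩, w, Or.inl hw, h⟩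
    · exact ⟨u, Or.inl hu, v, Or.inr ⟨rfl, hw⟩, h.symm⟩

theorem hasKMinor_four_of_support_subset [Fintype V] (s : Finset V) :
    ∀ G : SimpleGraph V, G.support ⊆ s → 2 ≤ s.card → 2 * s.card - 2 ≤ G.edgeFinset.card →
      HasKMinor G 4 := by
  induction s using Finset.strongInduction with
  | H s ih =>
    intro G hGs hs he
    obtain ⟨H, hHG, hHe⟩ := G.exists_le_card_edgeFinset_eq he
    refine HasKMinor.mono hHG ?_
    have hHs : H.support ⊆ s := (support_mono hHG).trans hGs
    have h4 : 4 ≤ s.card := by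
      have := card_edgeFinset_le_choose_two_of_support_subset hHs
      by_contra! h
      interval_cases hc : s.card <;> simp [Nat.choose] at this <;> omega
    obtain ⟨v, hvs, hv⟩ : ∃ v ∈ s, H.degree v < 4 := by
      refine Finset.exists_lt_of_sum_lt ?_
      rw [sum_degree_eq_twice_card_edges_of_support_subset hHs, hHe, Finset.sum_const, smul_eq_mul]
      omega
    have hsub : (H.support \ {v} : Set V) ⊆ (s.erase v : Finset V) := by
      rw [Finset.coe_erase]
      exact Set.sdiff_subset_sdiff_left hHs
    have hcard : (s.erase v).card = s.card - 1 := Finset.card_erase_of_mem hvs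
    have hlt : s.erase v ⊂ s := Finset.erase_ssubset hvs
    rcases (by omega : H.degree v ≤ 2 ∨ H.degree v = 3) with hv | hv
    · refine (ih _ hlt _ ((support_deleteIncidenceSet_subset H v).trans hsub) (by omega) ?_).mono
        (deleteIncidenceSet_le H v)
      calc 2 * (s.erase v).card - 2 ≤ H.edgeFinset.card - H.degree v := by omega
        _ = _ := by convert (card_edgeFinset_deleteIncidenceSet H v).symm
    by_cases hN : H.IsClique (H.neighborSet v)
    · have := not_cliqueFree_succ_of_isClique_neighborSet hN
      rw [hv] at this
      exact hasKMinor_of_not_cliqueFree this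
    obtain ⟨x, hx, y, hy, hxy, hn⟩ : ∃ x ∈ H.neighborSet v, ∃ y ∈ H.neighborSet v, x ≠ y ∧
        ¬ H.Adj x y := by
      simpa [IsClique, Set.Pairwise] using hN
    have := card_edgeFinset_sub_degree_lt_contract hx hy hxy hn
    exact (ih _ hlt _ ((support_contract_subset hx).trans hsub) (by omega) (by omega)).of_contract_s11
      hx (by norm_num)

end Minor

/-- Every graph on `n ≥ 4` vertices with at least `2n − 2` edges has a `K_4`
minor. -/
theorem stmt_11 {V : Type*} [Fintype V] (G : SimpleGraph V)
    (hn : 4 ≤ Fintype.card V)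
    (he : 2 * Fintype.card V - 2 ≤ G.edgeFinset.card) :
    HasKMinor G 4 :=
  hasKMinor_four_of_support_subset Finset.univ G (by simp) (by rw [Finset.card_univ]; omega)
    (by rwa [Finset.card_univ])
end

section
/- Let G be a vertex-critical 9-chromatic graph, x a vertex of G, and A an independent set in G[N(x)] with |A| ≥ d(x) − 6. If the graph G* obtained from G by contracting A ∪ {x} to a single vertex is 8-colorable, then G is 8-colorable (a contradiction with χ(G) = 9). -/
open SimpleGraph Set

attribute [local instance] Classical.propDecidable

/-- The graph obtained from `G` by contracting the set `B` to a single new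
vertex, adjacent to every vertex outside `B` having a neighbor in `B`. -/
def contractSet {V : Type*} (G : SimpleGraph V) (B : Set V) :
    SimpleGraph ({y : V // y ∉ B} ⊕ Unit) :=
  SimpleGraph.fromRel fun u w =>
    match u, w with
    | Sum.inl a, Sum.inl b => G.Adj a.1 b.1
    | Sum.inl a, Sum.inr _ => ∃ z ∈ B, G.Adj a.1 z
    | _, _ => False

/-!
Colour `G*` properly with 8 colours and give every vertex of `A ∪ {x}` the colour of the
contracted vertex `w`. Since `A` is independent, the only monochromatic edges are those
joining `x` to `A`. The neighbours of `x` now use at most `1 + |N(x) \ A| ≤ 7` colours, so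
`x` can be recoloured with a colour missing from its neighbourhood.
-/

namespace contractSet

variable {V α : Type*} {G : SimpleGraph V} {B : Set V}

lemma adj_inl_inl {u v : V} (hu : u ∉ B) (hv : v ∉ B) (h : G.Adj u v) :
    (contractSet G B).Adj (Sum.inl ⟨u, hu⟩) (Sum.inl ⟨v, hv⟩) :=
  ⟨by simp [h.ne], Or.inl h⟩

lemma adj_inl_inr {u z : V} (hu : u ∉ B) (hz : z ∈ B) (h : G.Adj u z) :
    (contractSet G B).Adj (Sum.inl ⟨u, hu⟩) (Sum.inr ()) :=
  ⟨by simp, Or.inl ⟨z, hz, h⟩⟩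

noncomputable def pullColor (c : (contractSet G B).Coloring α) (y : V) : α :=
  if h : y ∈ B then c (Sum.inr ()) else c (Sum.inl ⟨y, h⟩)

lemma pullColor_of_mem (c : (contractSet G B).Coloring α) {y : V} (hy : y ∈ B) :
    pullColor c y = c (Sum.inr ()) :=
  dif_pos hy

lemma pullColor_ne_of_adj (c : (contractSet G B).Coloring α) {u v : V} (h : G.Adj u v)
    (hu : u ∉ B) : pullColor c u ≠ pullColor c v := by
  rw [pullColor, dif_neg hu, pullColor]
  split_ifs with hv
  · exact c.valid (adj_inl_inr hu hv h)
  · exact c.valid (adj_inl_inl hu hv h)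

end contractSet

lemma SimpleGraph.update_ne_of_adj {V α : Type*} {G : SimpleGraph V} {x : V}
    {f : V → α} (hf : ∀ u v, u ≠ x → v ≠ x → G.Adj u v → f u ≠ f v) {a : α}
    (ha : a ∉ f '' G.neighborSet x) {u v : V} (huv : G.Adj u v) :
    Function.update f x a u ≠ Function.update f x a v := by
  by_cases hu : u = x
  · subst hu
    rw [Function.update_self, Function.update_of_ne huv.ne.symm]
    exact fun h => ha ⟨v, huv, h.symm⟩
  by_cases hv : v = x
  · subst hv
    rw [Function.update_self, Function.update_of_ne huv.ne]
    exact fun h => ha ⟨u, huv.symm, h⟩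
  rw [Function.update_of_ne hu, Function.update_of_ne hv]
  exact hf u v hu hv huv

lemma Set.ncard_image_le_ncard_sdiff_add_one {α β : Type*} {f : α → β} {s A : Set α} {b : β}
    (hs : s.Finite) (hf : ∀ y ∈ A, f y = b) : (f '' s).ncard ≤ (s \ A).ncard + 1 := by
  have hsub : f '' s ⊆ insert b (f '' (s \ A)) := by
    rintro _ ⟨y, hy, rfl⟩
    by_cases hyA : y ∈ A
    · exact Or.inl (hf y hyA)
    · exact Or.inr ⟨y, ⟨hy, hyA⟩, rfl⟩
  calc (f '' s).ncard ≤ (insert b (f '' (s \ A))).ncard :=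
        ncard_le_ncard hsub ((hs.sdiff.image f).insert b)
    _ ≤ (f '' (s \ A)).ncard + 1 := ncard_insert_le _ _
    _ ≤ (s \ A).ncard + 1 := by gcongr; exact ncard_image_le hs.sdiff

lemma Set.exists_notMem_of_ncard_lt_natCard {α : Type*} {S : Set α} (hS : S.ncard < Nat.card α) :
    ∃ a, a ∉ S := by
  by_contra! h
  rw [eq_univ_of_forall h, ncard_univ] at hS
  exact hS.false

lemma SimpleGraph.ncard_neighborSet {V : Type*} [Fintype V] (G : SimpleGraph V) (x : V) :
    (G.neighborSet x).ncard = G.degree x := by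
  rw [← Nat.card_coe_set_eq, Nat.card_eq_fintype_card, card_neighborSet_eq_degree]

theorem colorable_of_contractSet_colorable {V : Type*} [Fintype V] {G : SimpleGraph V}
    {x : V} {A : Set V} {k : ℕ} (hA : A ⊆ G.neighborSet x) (hind : _root_.IsIndepSet G A)
    (hcard : G.degree x + 2 ≤ A.ncard + k)
    (hcol : (contractSet G (A ∪ {x})).Colorable k) : G.Colorable k := by
  obtain ⟨c⟩ := hcol
  set f := contractSet.pullColor c
  have hproper : ∀ u v, u ≠ x → v ≠ x → G.Adj u v → f u ≠ f v := by
    intro u v hu hv huv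
    by_cases huA : u ∈ A
    · have hvA : v ∉ A := fun hvA => (hind huA hvA huv.ne).2 huv
      exact (contractSet.pullColor_ne_of_adj c huv.symm (by simp [hvA, hv])).symm
    · exact contractSet.pullColor_ne_of_adj c huv (by simp [huA, hu])
  have hfew : (f '' G.neighborSet x).ncard < k := by
    have hconst : ∀ y ∈ A, f y = c (Sum.inr ()) :=
      fun y hy => contractSet.pullColor_of_mem c (Or.inl hy)
    have hdiff : (G.neighborSet x \ A).ncard + A.ncard = G.degree x := by
      rw [ncard_sdiff_add_ncard_of_subset hA, G.ncard_neighborSet]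
    have himage := ncard_image_le_ncard_sdiff_add_one (toFinite (G.neighborSet x)) hconst
    omega
  obtain ⟨a, ha⟩ := exists_notMem_of_ncard_lt_natCard (by rwa [Nat.card_fin])
  exact ⟨Coloring.mk _ fun huv => update_ne_of_adj hproper ha huv⟩

theorem stmt_19_general {V : Type*} [Fintype V] (G : SimpleGraph V) (x : V)
    (A : Set V) (hA : A ⊆ G.neighborSet x) (hind : _root_.IsIndepSet G A)
    (hcard : G.degree x - 6 ≤ A.ncard)
    (hcol : (contractSet G (A ∪ {x})).Colorable 8) :
    G.Colorable 8 :=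
  colorable_of_contractSet_colorable hA hind (by omega) hcol

/-- If `G` is vertex-critical with `χ(G) = 9`, `A` is an independent set of
neighbors of `x` with `|A| ≥ d(x) − 6`, and the graph obtained by contracting
`A ∪ {x}` to a single vertex is 8-colorable, then `G` is 8-colorable. -/
theorem stmt_19 {V : Type*} [Fintype V] (G : SimpleGraph V) (x : V)
    (hχ : chromNum G = 9)
    (hcrit : ∀ v : V, chromNum (G.induce {v}ᶜ) < chromNum G)
    (A : Set V) (hA : A ⊆ G.neighborSet x) (hind : _root_.IsIndepSet G A)
    (hcard : G.degree x - 6 ≤ A.ncard)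
    (hcol : (contractSet G (A ∪ {x})).Colorable 8) :
    G.Colorable 8 :=
  stmt_19_general G x A hA hind hcard hcol
end
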